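/- arXiv:math/0412560 — 3 statements merged into one kernel-verified Lean document; each statement's English description precedes it below -/
import Mathlib

section
/- Let S be a topological space, Y a real topological vector space with topological dual Y*, and A: S → Y* a weakly-star continuous map. Then the set {(s,y) ∈ S × Y : A(s)(y) = 1} is disconnected if and only if S \ A⁻¹(0) is disconnected. -/
/-!
The projection `(s, y) ↦ s` maps the level set onto `{s | A s ≠ 0}`, which gives one direction.
Conversely, its fibres are affine hyperplanes, hence convex and preconnected, and it is open on
the level set because `t ↦ (t, (A t y)⁻¹ • y)` is a local continuous section through `(s, y)`;
a relatively open map with preconnected fibres pulls preconnectedness back.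
-/

open Set

/-- If `u` and `v` split `E`, their images split `f '' E`; over a point of the image where
both meet, the preconnected fibre forces `u ∩ v` to meet `E`. -/
theorem IsPreconnected.of_image_of_isPreconnected_fibers {X B : Type*} [TopologicalSpace X]
    [TopologicalSpace B] {f : X → B} {E : Set X}
    (hf : ∀ w, IsOpen w → IsOpen (f '' (w ∩ E)))
    (hfib : ∀ b, IsPreconnected (E ∩ f ⁻¹' {b}))
    (hE : IsPreconnected (f '' E)) : IsPreconnected E := by
  rintro u v hu hv hcov ⟨p, hpE, hpu⟩ ⟨q, hqE, hqv⟩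
  have hcov' : f '' E ⊆ f '' (u ∩ E) ∪ f '' (v ∩ E) := by
    rw [← image_union, ← union_inter_distrib_right]
    exact image_mono (subset_inter hcov subset_rfl)
  obtain ⟨_, ⟨x, hxE, rfl⟩, ⟨x₁, ⟨hx₁u, hx₁E⟩, hx₁⟩, ⟨x₂, ⟨hx₂v, hx₂E⟩, hx₂⟩⟩ :=
    hE _ _ (hf u hu) (hf v hv) hcov' ⟨f p, mem_image_of_mem f hpE, p, ⟨hpu, hpE⟩, rfl⟩
      ⟨f q, mem_image_of_mem f hqE, q, ⟨hqv, hqE⟩, rfl⟩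
  obtain ⟨z, ⟨hzE, -⟩, hzuv⟩ := hfib (f x) u v hu hv (fun y hy ↦ hcov hy.1)
    ⟨x₁, ⟨hx₁E, hx₁⟩, hx₁u⟩ ⟨x₂, ⟨hx₂E, hx₂⟩, hx₂v⟩
  exact ⟨z, hzE, hzuv⟩

section LevelSet

variable {S Y : Type*} [AddCommGroup Y] [Module ℝ Y] [TopologicalSpace Y]

theorem WeakDual.exists_eq_one_iff_ne_zero (φ : WeakDual ℝ Y) : (∃ y, φ y = 1) ↔ φ ≠ 0 := by
  constructor
  · rintro ⟨y, hy⟩ rfl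
    exact zero_ne_one hy
  · intro hφ
    obtain ⟨y, hy⟩ := ContinuousLinearMap.exists_ne_zero hφ
    exact ⟨(φ y)⁻¹ • y, by rw [map_smul, smul_eq_mul]; exact inv_mul_cancel₀ hy⟩

theorem fst_image_levelSet (A : S → WeakDual ℝ Y) :
    Prod.fst '' {p : S × Y | A p.1 p.2 = 1} = {s | A s ≠ 0} := by
  ext s
  simp only [mem_image, mem_ofPred_eq, Prod.exists, exists_and_right, exists_eq_right,
    WeakDual.exists_eq_one_iff_ne_zero]

theorem isPreconnected_levelSet_inter_fst_preimage [TopologicalSpace S] [ContinuousAdd Y]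
    [ContinuousSMul ℝ Y] (A : S → WeakDual ℝ Y) (s : S) :
    IsPreconnected ({p : S × Y | A p.1 p.2 = 1} ∩ Prod.fst ⁻¹' {s}) := by
  have hfiber : {p : S × Y | A p.1 p.2 = 1} ∩ Prod.fst ⁻¹' {s} = {s} ×ˢ {y | A s y = 1} := by
    ext ⟨t, y⟩
    simp only [mem_inter_iff, mem_ofPred_eq, mem_preimage, mem_singleton_iff, mem_prod]
    exact ⟨fun ⟨hy, ht⟩ ↦ ⟨ht, ht ▸ hy⟩, fun ⟨ht, hy⟩ ↦ ⟨ht ▸ hy, ht⟩⟩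
  rw [hfiber]
  exact isPreconnected_singleton.prod
    (convex_hyperplane (A s).toLinearMap.isLinear 1).isPreconnected

theorem isOpen_fst_image_inter_levelSet [TopologicalSpace S] [ContinuousSMul ℝ Y]
    {A : S → WeakDual ℝ Y} (hA : Continuous A) {w : Set (S × Y)} (hw : IsOpen w) :
    IsOpen (Prod.fst '' (w ∩ {p : S × Y | A p.1 p.2 = 1})) := by
  rw [isOpen_iff_mem_nhds]
  rintro _ ⟨⟨s, y⟩, ⟨hyw, hy : A s y = 1⟩, rfl⟩
  have hAy : Continuous fun t ↦ A t y := (WeakDual.eval_continuous y).comp hA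
  have hne : A s y ≠ 0 := hy ▸ one_ne_zero
  have hσ : ContinuousAt (fun t : S ↦ (t, (A t y)⁻¹ • y)) s :=
    continuousAt_id.prodMk ((hAy.continuousAt.inv₀ hne).smul continuousAt_const)
  have hσs : (s, (A s y)⁻¹ • y) ∈ w := by simpa [hy] using hyw
  filter_upwards [hσ.preimage_mem_nhds (hw.mem_nhds hσs),
    hAy.continuousAt.eventually_ne hne] with t htw htne
  exact ⟨(t, (A t y)⁻¹ • y), ⟨htw, by simp [inv_mul_cancel₀ htne]⟩, rfl⟩

end LevelSet

/-- (Ricceri) Let `S` be a topological space, `Y` a real topological vector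
space and `A : S → Y*` weakly-star continuous. Then `{(s,y) : A(s)(y) = 1}`
is disconnected iff `S \ A⁻¹(0)` is disconnected. -/
theorem disconnected_level_set_iff
    (S : Type*) [TopologicalSpace S]
    (Y : Type*) [AddCommGroup Y] [Module ℝ Y] [TopologicalSpace Y]
    [IsTopologicalAddGroup Y] [ContinuousSMul ℝ Y]
    (A : S → WeakDual ℝ Y) (hA : Continuous A) :
    ¬ IsConnected {p : S × Y | A p.1 p.2 = 1} ↔
      ¬ IsConnected {s : S | A s ≠ 0} := by
  rw [not_iff_not, ← fst_image_levelSet A]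
  refine ⟨fun hE ↦ hE.image _ continuous_fst.continuousOn, fun hU ↦ ⟨?_, ?_⟩⟩
  · exact hU.nonempty.of_image
  · exact hU.isPreconnected.of_image_of_isPreconnected_fibers
      (fun _ hw ↦ isOpen_fst_image_inter_levelSet hA hw)
      (isPreconnected_levelSet_inter_fst_preimage A)
end

section
/- Let S be a topological space, Y a real topological vector space, and A: S → Y* weakly-star continuous. If the set {(s,y) ∈ S × Y : A(s)(y) = 1} is disconnected, then S \ A⁻¹(0) is disconnected. -/
open Set Filter Topology

/-!
The projection `(s, y) ↦ s` maps the level set `{A s y = 1}` onto `{A s ≠ 0}`. Its fibres are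
affine hyperplanes, hence connected, and it is open: through a point `(s₀, y₀)` of the level set,
`s ↦ (s, (A s y₀)⁻¹ • y₀)` is a continuous local section, because weak-star continuity of `A`
makes `s ↦ A s y₀` continuous. An open continuous surjection with connected fibres onto a
connected space has connected domain.
-/

theorem IsOpenMap.of_eventually_sections {X Z : Type*} [TopologicalSpace X] [TopologicalSpace Z]
    {f : X → Z}
    (h : ∀ x, ∃ g : Z → X, ContinuousAt g (f x) ∧ g (f x) = x ∧ ∀ᶠ z in 𝓝 (f x), f (g z) = z) :
    IsOpenMap f :=
  of_nhds_le fun x => by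
    obtain ⟨g, hgc, hgx, hfg⟩ := h x
    calc 𝓝 (f x) = map f (map g (𝓝 (f x))) := by
          rw [map_map, map_congr (show f ∘ g =ᶠ[𝓝 (f x)] id from hfg), map_id]
      _ ≤ map f (𝓝 (g (f x))) := map_mono hgc
      _ = map f (𝓝 x) := by rw [hgx]

theorem IsOpenMap.connectedSpace_of_isConnected_preimage_singleton {X Z : Type*}
    [TopologicalSpace X] [TopologicalSpace Z] [ConnectedSpace Z] {f : X → Z} (ho : IsOpenMap f)
    (hc : Continuous f) (hfib : ∀ z, IsConnected (f ⁻¹' {z})) : ConnectedSpace X := by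
  have hq := ho.isQuotientMap hc fun z => (hfib z).nonempty
  rw [connectedSpace_iff_univ, ← preimage_univ (f := f)]
  exact hq.isCoinducing.isConnected_preimage_of_isClosed hfib isClosed_univ isConnected_univ

section LevelSet

variable {S Y : Type*} [TopologicalSpace S] [AddCommGroup Y] [Module ℝ Y] [TopologicalSpace Y]
  (A : S → WeakDual ℝ Y)

theorem WeakDual.exists_apply_eq_one {φ : WeakDual ℝ Y} (hφ : φ ≠ 0) : ∃ y, φ y = 1 := by
  obtain ⟨y, hy⟩ := DFunLike.ne_iff.mp hφ
  exact ⟨(φ y)⁻¹ • y, by rw [map_smul, smul_eq_mul, inv_mul_cancel₀ hy]⟩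

def levelSetFst (p : {p : S × Y | A p.1 p.2 = 1}) : {s : S | A s ≠ 0} :=
  ⟨p.1.1, fun h => by
    have hp : A p.1.1 p.1.2 = 1 := p.2
    rw [h] at hp
    exact zero_ne_one hp⟩

theorem continuous_levelSetFst : Continuous (levelSetFst A) :=
  (continuous_subtype_val.fst).subtype_mk _

theorem isConnected_levelSetFst_preimage_singleton [ContinuousAdd Y] [ContinuousSMul ℝ Y]
    (b : {s : S | A s ≠ 0}) : IsConnected (levelSetFst A ⁻¹' {b}) := by
  obtain ⟨y, hy⟩ := WeakDual.exists_apply_eq_one b.2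
  have himage : Subtype.val '' (levelSetFst A ⁻¹' {b}) = {b.1} ×ˢ {y | A b y = 1} := by
    ext ⟨s, z⟩
    simp +contextual [levelSetFst, Subtype.ext_iff]
  refine ⟨⟨⟨(b, y), hy⟩, rfl⟩, ?_⟩
  rw [← IsInducing.subtypeVal.isPreconnected_image, himage]
  exact isPreconnected_singleton.prod
    (convex_hyperplane (A b).toLinearMap.isLinear 1).isPreconnected

theorem isOpenMap_levelSetFst [ContinuousSMul ℝ Y] (hA : Continuous A) :
    IsOpenMap (levelSetFst A) := by
  refine IsOpenMap.of_eventually_sections fun x => ?_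
  obtain ⟨⟨s₀, y₀⟩, hx⟩ := x
  have hx' : A s₀ y₀ = 1 := hx
  -- the first branch is a filler: only the germ of `g` at `s₀` matters
  let g (b : {s : S | A s ≠ 0}) : {p : S × Y | A p.1 p.2 = 1} :=
    if hb : A b y₀ = 0 then ⟨(s₀, y₀), hx⟩ else ⟨(b, (A b y₀)⁻¹ • y₀), by simp [hb]⟩
  have hcont : Continuous fun b : {s : S | A s ≠ 0} => A b y₀ :=
    (WeakDual.eval_continuous y₀).comp (hA.comp continuous_subtype_val)
  have hnear : ∀ᶠ b : {s : S | A s ≠ 0} in 𝓝 (levelSetFst A ⟨(s₀, y₀), hx⟩), A b y₀ ≠ 0 :=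
    hcont.continuousAt.eventually_ne (by simp [levelSetFst, hx'])
  refine ⟨g, ?_, by simp [g, levelSetFst, hx'],
    hnear.mono fun b hb => by simp [g, hb, levelSetFst]⟩
  rw [IsInducing.subtypeVal.continuousAt_iff]
  refine ContinuousAt.congr (f := fun b : {s : S | A s ≠ 0} => (b.1, (A b y₀)⁻¹ • y₀)) ?_
    (hnear.mono fun b hb => by simp [g, hb])
  exact continuous_subtype_val.continuousAt.prodMk
    ((hcont.continuousAt.inv₀ (by simp [levelSetFst, hx'])).smul continuousAt_const)

end LevelSet

/-- Let `S` be a topological space, `Y` a real topological vector space and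
`A : S → Y*` weakly-star continuous. If `{(s,y) : A(s)(y) = 1}` is
disconnected, then `S \ A⁻¹(0)` is disconnected. -/
theorem disconnected_base_of_disconnected_level_set
    (S : Type*) [TopologicalSpace S]
    (Y : Type*) [AddCommGroup Y] [Module ℝ Y] [TopologicalSpace Y]
    [IsTopologicalAddGroup Y] [ContinuousSMul ℝ Y]
    (A : S → WeakDual ℝ Y) (hA : Continuous A)
    (h : ¬ IsConnected {p : S × Y | A p.1 p.2 = 1}) :
    ¬ IsConnected {s : S | A s ≠ 0} := by
  contrapose! h
  rw [isConnected_iff_connectedSpace] at h ⊢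
  exact (isOpenMap_levelSetFst A hA).connectedSpace_of_isConnected_preimage_singleton
    (continuous_levelSetFst A) (isConnected_levelSetFst_preimage_singleton A)
end

section
/- Let S be a connected topological space, Y a real topological vector space, and A: S → Y* weakly-star continuous with A(s) ≠ 0 for all s ∈ S. Then the set {(s,y) ∈ S × Y : A(s)(y) = 1} is connected. -/
/-!
The projection of the level set `E = {(s, y) | A s y = 1}` onto `S` is surjective, its fibres
are affine hyperplanes (nonempty and convex, hence connected), and it is open: through a point
`(s₀, y₀)` of `E` passes the local section `s ↦ (s, (A s y₀)⁻¹ • y₀)`, defined wherever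
`A s y₀ ≠ 0`. A continuous open surjection with connected fibres onto a connected space has
connected domain.
-/

open Set Filter Topology Function

section
variable {X B : Type*} [TopologicalSpace X] [TopologicalSpace B]

theorem IsOpenMap.domRestrict_of_eventually_sections {f : X → B} {E : Set X}
    (h : ∀ x ∈ E, ∃ g : B → X, ContinuousAt g (f x) ∧ g (f x) = x ∧
      ∀ᶠ b in 𝓝 (f x), g b ∈ E ∧ f (g b) = b) :
    IsOpenMap (E.domRestrict f) := by
  refine IsOpenMap.of_nhds_le fun ⟨x, hx⟩ U hU => ?_
  obtain ⟨g, hgc, hgx, hgE⟩ := h x hx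
  obtain ⟨V, hV, hVU⟩ := mem_nhds_subtype E ⟨x, hx⟩ _ |>.mp hU
  filter_upwards [hgc (by rwa [hgx]), hgE] with b hbV ⟨hbE, hfb⟩
  exact hfb ▸ hVU (show (⟨g b, hbE⟩ : E).1 ∈ V from hbV)

theorem ConnectedSpace.of_isOpenMap [ConnectedSpace B] {f : X → B} (hcont : Continuous f)
    (hopen : IsOpenMap f) (hfib : ∀ b, IsConnected (f ⁻¹' {b})) : ConnectedSpace X := by
  have hsurj : Surjective f := fun b => (hfib b).nonempty
  have hcoind := (hopen.isQuotientMap hcont hsurj).isCoinducing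
  rw [connectedSpace_iff_univ, ← preimage_univ (f := f)]
  exact hcoind.isConnected_preimage_of_isClosed hfib isClosed_univ isConnected_univ

end

section
variable {S Y : Type*} [TopologicalSpace S] [TopologicalSpace Y]

theorem isConnected_domRestrict_fst_preimage {E : Set (S × Y)} {s : S}
    (hs : IsConnected {y | (s, y) ∈ E}) : IsConnected (E.domRestrict Prod.fst ⁻¹' {s}) := by
  have himage :
      Subtype.val '' (E.domRestrict Prod.fst ⁻¹' {s}) = Prod.mk s '' {y | (s, y) ∈ E} := by
    ext p
    constructor
    · rintro ⟨⟨_, hq⟩, rfl, rfl⟩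
      exact ⟨_, hq, rfl⟩
    · rintro ⟨y, hy, rfl⟩
      exact ⟨⟨_, hy⟩, rfl, rfl⟩
  obtain ⟨y, hy⟩ := hs.nonempty
  refine ⟨⟨⟨(s, y), hy⟩, rfl⟩, IsInducing.subtypeVal.isPreconnected_image.mp ?_⟩
  exact himage ▸ hs.isPreconnected.image _ (Continuous.prodMk_right s).continuousOn

theorem isConnected_of_isConnected_slices_of_local_sections [ConnectedSpace S] {E : Set (S × Y)}
    (hslice : ∀ s, IsConnected {y | (s, y) ∈ E})
    (hsec : ∀ p ∈ E, ∃ g : S → Y, ContinuousAt g p.1 ∧ g p.1 = p.2 ∧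
      ∀ᶠ s in 𝓝 p.1, (s, g s) ∈ E) :
    IsConnected E := by
  rw [isConnected_iff_connectedSpace]
  refine .of_isOpenMap (continuous_fst.comp continuous_subtype_val) ?_
    fun s => isConnected_domRestrict_fst_preimage (hslice s)
  refine IsOpenMap.domRestrict_of_eventually_sections fun p hp => ?_
  obtain ⟨g, hgc, hgp, hgE⟩ := hsec p hp
  exact ⟨fun s => (s, g s), continuousAt_id.prodMk hgc, Prod.ext rfl hgp,
    hgE.mono fun s hs => ⟨hs, rfl⟩⟩

end

section
variable {S Y : Type*} [TopologicalSpace S] [AddCommGroup Y] [Module ℝ Y] [TopologicalSpace Y]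

theorem Module.Dual.isConnected_preimage_one [ContinuousAdd Y] [ContinuousSMul ℝ Y]
    {f : Module.Dual ℝ Y} (hf : f ≠ 0) : IsConnected {y | f y = 1} :=
  (convex_hyperplane f.isLinear 1).isConnected (LinearMap.surjective hf 1)

theorem exists_local_section_apply_eq_one [ContinuousSMul ℝ Y] {A : S → Module.Dual ℝ Y}
    (hA : ∀ y, Continuous fun s => A s y) {s₀ : S} {y₀ : Y} (h : A s₀ y₀ = 1) :
    ∃ g : S → Y, ContinuousAt g s₀ ∧ g s₀ = y₀ ∧ ∀ᶠ s in 𝓝 s₀, A s (g s) = 1 := by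
  have h0 : A s₀ y₀ ≠ 0 := h ▸ one_ne_zero
  have hne : ∀ᶠ s in 𝓝 s₀, A s y₀ ≠ 0 := (hA y₀).continuousAt.eventually_ne h0
  refine ⟨fun s => (A s y₀)⁻¹ • y₀, ((hA y₀).continuousAt.inv₀ h0).smul continuousAt_const,
    by simp [h], hne.mono fun s hs => ?_⟩
  rw [map_smul, smul_eq_mul, inv_mul_cancel₀ hs]

end

/-- Let `S` be a connected topological space, `Y` a real topological vector
space and `A : S → Y*` weakly-star continuous with `A s ≠ 0` for all `s`.
Then `{(s,y) : A(s)(y) = 1}` is connected. -/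
theorem connected_level_set
    (S : Type*) [TopologicalSpace S] [ConnectedSpace S]
    (Y : Type*) [AddCommGroup Y] [Module ℝ Y] [TopologicalSpace Y]
    [IsTopologicalAddGroup Y] [ContinuousSMul ℝ Y]
    (A : S → WeakDual ℝ Y) (hA : Continuous A)
    (hA0 : ∀ s : S, A s ≠ 0) :
    IsConnected {p : S × Y | A p.1 p.2 = 1} := by
  let A' : S → Module.Dual ℝ Y := fun s => (A s : Y →L[ℝ] ℝ).toLinearMap
  have hA' : ∀ y, Continuous fun s => A' s y := fun y => (WeakDual.eval_continuous y).comp hA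
  have hA'0 : ∀ s, A' s ≠ 0 := fun s h => hA0 s (ContinuousLinearMap.coe_injective h)
  exact isConnected_of_isConnected_slices_of_local_sections
    (fun s => Module.Dual.isConnected_preimage_one (hA'0 s))
    fun _ hp => exists_local_section_apply_eq_one hA' hp
end
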